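/- Let Σ be a signed graph on a circle C with two noncrossing chords c1 and c2, and let e be an edge of C lying on the segment of C between the two chords (so the segment containing e is not a handle). Then e does not lie in a unique negative circle, and e does not lie in a unique positive circle. -/

import Mathlib

/-!
Every circle through `e` contains the whole segment `P₂`, since the inner vertices of a
segment have degree two. At `b` and at `c` it then continues along exactly one of the handle
and its chord, and at `a` this forces it onto `P₄`. So the circles through `e` are the four
circles choosing independently `P₁` or the chord `ab`, and `P₃` or the chord `cd`, and their
signs have the form `x i * y j * k`. Switching the choice on a side where handle and chord have
the same sign, or on both sides when neither does, gives another circle through `e` of the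
same sign, so no sign is attained by exactly one circle.
-/

open SimpleGraph Finset

variable {V : Type*} [DecidableEq V]

/-- The sign (product of edge signs) of a finite set of edges. -/
def esign (σ : Sym2 V → ℤˣ) (s : Finset (Sym2 V)) : ℤˣ := ∏ e ∈ s, σ e

/-- The sign of a walk: the product of the signs of its edges. -/
def wsign (σ : Sym2 V → ℤˣ) {G : SimpleGraph V} {u v : V} (w : G.Walk u v) : ℤˣ :=
  (w.edges.map σ).prod

/-- `s` is the edge set of a circle (cycle) of `G`. -/
def IsCircleOf (G : SimpleGraph V) (s : Finset (Sym2 V)) : Prop :=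
  ∃ (a : V) (w : G.Walk a a), w.IsCycle ∧ w.edges.toFinset = s

/-- The signature obtained from `σ` by switching with `ζ`. -/
def switchSign (σ : Sym2 V → ℤˣ) (ζ : V → ℤˣ) : Sym2 V → ℤˣ :=
  fun e => Sym2.lift ⟨fun a b => ζ a * σ s(a, b) * ζ b, by
    intro a b
    simp only []
    rw [Sym2.eq_swap]
    simp [mul_comm, mul_assoc, mul_left_comm]⟩ e

/-- `b` is a balancing edge: one can switch so that `b` is the unique negative edge. -/
def IsBalancingEdge (G : SimpleGraph V) (σ : Sym2 V → ℤˣ) (b : Sym2 V) : Prop :=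
  b ∈ G.edgeSet ∧ ∃ ζ : V → ℤˣ, ∀ f ∈ G.edgeSet, (switchSign σ ζ f = -1 ↔ f = b)

/-- `F` is the edge set of a bridge of the circle `w` in `G`: either a single
chord of `w`, or the edge set attached to a connected component of `G` minus
the vertices of `w`. -/
def IsBridgeOf {a : V} (G : SimpleGraph V) (w : G.Walk a a) (F : Set (Sym2 V)) : Prop :=
  (∃ x y : V, x ≠ y ∧ x ∈ w.support ∧ y ∈ w.support ∧ G.Adj x y ∧
      s(x, y) ∉ w.edges ∧ F = {s(x, y)}) ∨
  (∃ D : Set V, D.Nonempty ∧ (∀ x ∈ D, x ∉ w.support) ∧ (G.induce D).Connected ∧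
      (∀ x ∈ D, ∀ y : V, G.Adj x y → y ∈ D ∨ y ∈ w.support) ∧
      F = {e | e ∈ G.edgeSet ∧ ∃ x ∈ D, x ∈ e})

/-- The vertices of attachment of a bridge with edge set `F`. -/
def attachments {a : V} (G : SimpleGraph V) (w : G.Walk a a) (F : Set (Sym2 V)) : Set V :=
  {x | x ∈ w.support ∧ ∃ e ∈ F, x ∈ e}

/-- A path through a bridge: a path between two distinct vertices of attachment
all of whose edges lie in the bridge. -/
def IsPathThrough {a : V} (G : SimpleGraph V) (w : G.Walk a a) (F : Set (Sym2 V))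
    {x y : V} (Q : G.Walk x y) : Prop :=
  x ≠ y ∧ x ∈ attachments G w F ∧ y ∈ attachments G w F ∧ Q.IsPath ∧
    ∀ e ∈ Q.edges, e ∈ F

/-- `G` is a block: it is connected and has no cutpoint. -/
def IsBlock (G : SimpleGraph V) : Prop :=
  G.Connected ∧ ∀ v : V, ((⊤ : G.Subgraph).deleteVerts {v}).coe.Connected

namespace SimpleGraph.Walk

variable {V : Type*} {G : SimpleGraph V}

lemma snd_append {u v w : V} {p : G.Walk u v} (hp : ¬p.Nil) (q : G.Walk v w) :
    (p.append q).snd = p.snd := by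
  cases p with
  | nil => simp at hp
  | cons h p => simp

lemma IsTrail.ne_of_mem_edges_append {u v w : V} {p : G.Walk u v} {q : G.Walk v w}
    (h : (p.append q).IsTrail) {f g : Sym2 V} (hf : f ∈ p.edges) (hg : g ∈ q.edges) : f ≠ g := by
  rintro rfl
  exact List.disjoint_of_nodup_append (edges_append p q ▸ h.edges_nodup) hf hg

lemma isCycle_append_comm {u v : V} {p : G.Walk u v} {q : G.Walk v u} :
    (p.append q).IsCycle ↔ (q.append p).IsCycle := by
  have key : ∀ {x y : V} (p : G.Walk x y) (q : G.Walk y x),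
      (p.append q).IsCycle → (q.append p).IsCycle := by
    intro x y p q h
    rw [isCycle_def, isTrail_def, edges_append, tail_support_append] at h ⊢
    refine ⟨List.nodup_append_comm.1 h.1, fun h0 => h.2.1 ?_, List.nodup_append_comm.1 h.2.2⟩
    rw [eq_nil_iff_nil, ← length_eq_zero_iff, length_append] at h0 ⊢
    omega
  exact ⟨key p q, key q p⟩

lemma IsCycle.rotate_append {u₁ u₂ u₃ u₄ : V} {p₁ : G.Walk u₁ u₂} {p₂ : G.Walk u₂ u₃}
    {p₃ : G.Walk u₃ u₄} {p₄ : G.Walk u₄ u₁} (h : (p₁.append (p₂.append (p₃.append p₄))).IsCycle) :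
    (p₂.append (p₃.append (p₄.append p₁))).IsCycle := by
  simpa only [append_assoc] using isCycle_append_comm.1 h

lemma IsCycle.notMem_support_of_append {u v z : V} {p : G.Walk u v} {q : G.Walk v u}
    (h : (p.append q).IsCycle) (hz : z ∈ p.support) (hzu : z ≠ u) (hzv : z ≠ v) :
    z ∉ q.support := by
  have hnd := h.support_nodup
  rw [tail_support_append, List.nodup_append] at hnd
  intro hzq
  exact hnd.2.2 z ((p.mem_support_iff.1 hz).resolve_left hzu) z
    ((q.mem_support_iff.1 hzq).resolve_left hzv) rfl

lemma IsCycle.exists_incident_edges {u x : V} {c : G.Walk u u} (hc : c.IsCycle)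
    (hx : x ∈ c.support) : ∃ f g, f ≠ g ∧ ∀ k, k ∈ c.edges ∧ x ∈ k ↔ k = f ∨ k = g := by
  classical
  have hc' := hc.rotate hx
  have hnb := hc'.neighborSet_toSubgraph_endpoint
  refine ⟨s(x, (c.rotate x hx).snd), s(x, (c.rotate x hx).penultimate),
    fun h => hc'.snd_ne_penultimate (Sym2.congr_right.1 h), fun k => ?_⟩
  rw [← (c.rotate_edges x hx).mem_iff]
  constructor
  · rintro ⟨hk, hxk⟩
    obtain ⟨y, rfl⟩ := Sym2.mem_iff_exists.1 hxk
    have : y ∈ (c.rotate x hx).toSubgraph.neighborSet x := adj_toSubgraph_iff_mem_edges.2 hk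
    rw [hnb] at this
    rcases this with rfl | rfl <;> simp
  · rintro (rfl | rfl)
    · exact ⟨mk_start_snd_mem_edges hc'.not_nil, Sym2.mem_mk_left _ _⟩
    · exact ⟨Sym2.eq_swap ▸ mk_penultimate_end_mem_edges hc'.not_nil, Sym2.mem_mk_left _ _⟩

lemma IsCycle.exists_mem_edges_ne {u x : V} {c : G.Walk u u} (hc : c.IsCycle) {f : Sym2 V}
    (hf : f ∈ c.edges) (hxf : x ∈ f) : ∃ g ∈ c.edges, g ≠ f ∧ x ∈ g := by
  obtain ⟨g₁, g₂, hne, hiff⟩ := hc.exists_incident_edges (c.mem_support_of_mem_edges hf hxf)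
  obtain ⟨h₁, hx₁⟩ := (hiff g₁).2 (Or.inl rfl)
  obtain ⟨h₂, hx₂⟩ := (hiff g₂).2 (Or.inr rfl)
  by_cases hg : g₁ = f
  · exact ⟨g₂, h₂, fun h => hne (hg.trans h.symm), hx₂⟩
  · exact ⟨g₁, h₁, hg, hx₁⟩

lemma IsCycle.eq_or_eq_of_mem_edges {u x : V} {c : G.Walk u u} (hc : c.IsCycle)
    {f g k : Sym2 V} (hf : f ∈ c.edges) (hg : g ∈ c.edges) (hk : k ∈ c.edges) (hfg : f ≠ g)
    (hxf : x ∈ f) (hxg : x ∈ g) (hxk : x ∈ k) : k = f ∨ k = g := by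
  obtain ⟨g₁, g₂, -, hiff⟩ := hc.exists_incident_edges (c.mem_support_of_mem_edges hf hxf)
  have := (hiff f).1 ⟨hf, hxf⟩
  have := (hiff g).1 ⟨hg, hxg⟩
  have := (hiff k).1 ⟨hk, hxk⟩
  grind

lemma IsCycle.mem_edges_iff_of_degree_two {u x : V} {c : G.Walk u u} (hc : c.IsCycle)
    {f g : Sym2 V} (hfg : f ≠ g) (hxf : x ∈ f) (hxg : x ∈ g)
    (hx : ∀ k ∈ G.edgeSet, x ∈ k → k = f ∨ k = g) : f ∈ c.edges ↔ g ∈ c.edges := by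
  have other : ∀ {f g}, f ≠ g → x ∈ f → (∀ k ∈ G.edgeSet, x ∈ k → k = f ∨ k = g) →
      f ∈ c.edges → g ∈ c.edges := by
    intro f g hfg hxf hx hf
    obtain ⟨k, hk, hkf, hxk⟩ := hc.exists_mem_edges_ne hf hxf
    obtain rfl := (hx k (c.edges_subset_edgeSet hk) hxk).resolve_left hkf
    exact hk
  exact ⟨other hfg hxf hx, other hfg.symm hxg fun k hk hxk => (hx k hk hxk).symm⟩

lemma IsCycle.mem_edges_iff_xor_of_degree_three {u x : V} {c : G.Walk u u} (hc : c.IsCycle)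
    {f g h : Sym2 V} (hfg : f ≠ g) (hfh : f ≠ h) (hgh : g ≠ h) (hxf : x ∈ f) (hxg : x ∈ g)
    (hxh : x ∈ h) (hx : ∀ k ∈ G.edgeSet, x ∈ k → k = f ∨ k = g ∨ k = h) :
    f ∈ c.edges ↔ Xor (g ∈ c.edges) (h ∈ c.edges) := by
  by_cases hxc : x ∈ c.support
  · obtain ⟨g₁, g₂, hne, hiff⟩ := hc.exists_incident_edges hxc
    have h₁ := hx g₁ (c.edges_subset_edgeSet ((hiff g₁).2 (Or.inl rfl)).1)
      ((hiff g₁).2 (Or.inl rfl)).2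
    have h₂ := hx g₂ (c.edges_subset_edgeSet ((hiff g₂).2 (Or.inr rfl)).1)
      ((hiff g₂).2 (Or.inr rfl)).2
    have hf := hiff f
    have hg := hiff g
    have hh := hiff h
    simp only [hxf, hxg, hxh, and_true] at hf hg hh
    rw [hf, hg, hh, Xor]
    grind
  · have (k : Sym2 V) (hxk : x ∈ k) : k ∉ c.edges :=
      fun hk => hxc (c.mem_support_of_mem_edges hk hxk)
    simp [this f hxf, this g hxg, this h hxh, Xor]

lemma eq_or_eq_of_mem_edges_cons {u x v : V} {hadj : G.Adj u x} {p : G.Walk x v}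
    (hp : p.IsPath) {k : Sym2 V} (hk : k ∈ (cons hadj p).edges) (hxk : x ∈ k) :
    k = s(x, p.snd) ∨ k = s(u, x) := by
  rw [edges_cons, List.mem_cons] at hk
  rcases hk with rfl | hkp
  · exact Or.inr rfl
  · obtain ⟨y, rfl⟩ := Sym2.mem_iff_exists.1 hxk
    exact Or.inl (by rw [hp.eq_snd_of_mem_edges hkp])

lemma IsPath.mem_edges_iff_mem_edges_of_isCycle {u v w : V} {c : G.Walk w w} (hc : c.IsCycle)
    {p : G.Walk u v} (hp : p.IsPath)
    (hint : ∀ z ∈ p.support, z ≠ u → z ≠ v → ∀ k ∈ G.edgeSet, z ∈ k → k ∈ p.edges)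
    {f : Sym2 V} (hf : f ∈ p.edges) : f ∈ c.edges ↔ s(u, p.snd) ∈ c.edges := by
  induction p with
  | nil => simp at hf
  | @cons u x v hadj p ih =>
    rw [cons_isPath_iff] at hp
    rw [edges_cons, List.mem_cons] at hf
    rcases hf with rfl | hf
    · simp
    have hpn : ¬p.Nil := edges_eq_nil.not.mp (List.ne_nil_of_mem hf)
    have hxu : x ≠ u := hadj.ne.symm
    have hxv : x ≠ v := by
      rintro rfl
      exact hpn (isPath_iff_nil.1 hp.1)
    have hint' : ∀ z ∈ p.support, z ≠ x → z ≠ v → ∀ k ∈ G.edgeSet, z ∈ k → k ∈ p.edges := by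
      intro z hz hzx hzv k hk hzk
      have hzu : z ≠ u := fun h => hp.2 (h ▸ hz)
      have := hint z (by simp [hz]) hzu hzv k hk hzk
      rw [edges_cons, List.mem_cons] at this
      refine this.resolve_left ?_
      rintro rfl
      rcases Sym2.mem_iff.1 hzk with rfl | rfl
      exacts [hzu rfl, hzx rfl]
    have hne : s(x, p.snd) ≠ s(u, x) := by
      have : p.snd ≠ u := fun h => hp.2 (h ▸ p.snd_mem_support_of_mem_edges
        (mk_start_snd_mem_edges hpn))
      simp [hxu, this]
    rw [ih hp.1 hint' hf, snd_cons]
    exact hc.mem_edges_iff_of_degree_two hne (Sym2.mem_mk_left _ _) (Sym2.mem_mk_right _ _)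
      fun k hk hxk => eq_or_eq_of_mem_edges_cons hp.1 (hint x (by simp) hxu hxv k hk hxk) hxk

lemma IsCycle.mem_edges_iff_of_append {u v w : V} {p : G.Walk u v} {q : G.Walk v u}
    (hC : (p.append q).IsCycle) (hq : ¬q.Nil)
    (hG : ∀ f ∈ G.edgeSet, f ∈ (p.append q).edges ∨ ∀ y ∈ f, y ∈ q.support) {c : G.Walk w w}
    (hc : c.IsCycle) {f g : Sym2 V} (hf : f ∈ p.edges) (hg : g ∈ p.edges) :
    f ∈ c.edges ↔ g ∈ c.edges := by
  have hint : ∀ z ∈ p.support, z ≠ u → z ≠ v → ∀ k ∈ G.edgeSet, z ∈ k → k ∈ p.edges := by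
    intro z hz hzu hzv k hk hzk
    have hzq := hC.notMem_support_of_append hz hzu hzv
    rcases hG k hk with hkC | hkq
    · rw [edges_append, List.mem_append] at hkC
      exact hkC.resolve_right fun hkq => hzq (q.mem_support_of_mem_edges hkq hzk)
    · exact absurd (hkq z hzk) hzq
  have hp := hC.isPath_of_append_left hq
  rw [hp.mem_edges_iff_mem_edges_of_isCycle hc hint hf,
    hp.mem_edges_iff_mem_edges_of_isCycle hc hint hg]

lemma IsCycle.mem_edges_iff_xor_of_append {u v w : V} {p : G.Walk u v} {q : G.Walk v u}
    (hC : (p.append q).IsCycle) (hp : ¬p.Nil) (hq : ¬q.Nil) {k : Sym2 V} (hvk : v ∈ k)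
    (hk : k ∉ (p.append q).edges) (hG : ∀ f ∈ G.edgeSet, v ∈ f → f ∈ (p.append q).edges ∨ f = k)
    {c : G.Walk w w} (hc : c.IsCycle) :
    s(v, q.snd) ∈ c.edges ↔ Xor (s(p.penultimate, v) ∈ c.edges) (k ∈ c.edges) := by
  have h₁ : s(p.penultimate, v) ∈ p.edges := mk_penultimate_end_mem_edges hp
  have h₂ : s(v, q.snd) ∈ q.edges := mk_start_snd_mem_edges hq
  have hC₁ : s(p.penultimate, v) ∈ (p.append q).edges := by simp [h₁]
  have hC₂ : s(v, q.snd) ∈ (p.append q).edges := by simp [h₂]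
  refine hc.mem_edges_iff_xor_of_degree_three (hC.isTrail.ne_of_mem_edges_append h₁ h₂).symm
    (fun h => hk (h ▸ hC₂)) (fun h => hk (h ▸ hC₁)) (Sym2.mem_mk_left _ _)
    (Sym2.mem_mk_right _ _) hvk fun f hf hvf => ?_
  rcases hG f hf hvf with hfC | rfl
  · rcases hC.eq_or_eq_of_mem_edges hC₁ hC₂ hfC (hC.isTrail.ne_of_mem_edges_append h₁ h₂)
      (Sym2.mem_mk_right _ _) (Sym2.mem_mk_left _ _) hvf with h | h
    · exact Or.inr (Or.inl h)
    · exact Or.inl h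
  · exact Or.inr (Or.inr rfl)

def orChord {u v : V} (p : G.Walk u v) (h : G.Adj u v) : Bool → G.Walk u v
  | true => h.toWalk
  | false => p

@[simp] lemma orChord_true {u v : V} (p : G.Walk u v) (h : G.Adj u v) :
    p.orChord h true = h.toWalk := rfl

@[simp] lemma orChord_false {u v : V} (p : G.Walk u v) (h : G.Adj u v) :
    p.orChord h false = p := rfl

lemma IsCycle.orChord_append {u v : V} {p : G.Walk u v} {q : G.Walk v u}
    (hC : (p.append q).IsCycle) (h : G.Adj u v) (hq : s(u, v) ∉ q.edges) :
    ∀ i, ((p.orChord h i).append q).IsCycle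
  | true => (cons_isCycle_iff q h).2 ⟨hC.isPath_of_append_right (not_nil_of_ne h.ne), hq⟩
  | false => hC

end SimpleGraph.Walk

lemma wsign_append {V : Type*} [DecidableEq V] (σ : Sym2 V → ℤˣ) {G : SimpleGraph V}
    {u v w : V} (p : G.Walk u v) (q : G.Walk v w) :
    wsign σ (p.append q) = wsign σ p * wsign σ q := by
  simp [wsign, SimpleGraph.Walk.edges_append]

lemma esign_toFinset_edges {V : Type*} [DecidableEq V] (σ : Sym2 V → ℤˣ) {G : SimpleGraph V}
    {u v : V} {p : G.Walk u v} (hp : p.IsTrail) : esign σ p.edges.toFinset = wsign σ p :=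
  List.prod_toFinset σ hp.edges_nodup

lemma exists_ne_mul_eq_mul (x y : Bool → ℤˣ) (i j : Bool) :
    ∃ i' j', (i', j') ≠ (i, j) ∧ x i' * y j' = x i * y j := by
  by_cases hx : x (!i) = x i
  · exact ⟨!i, j, by simp, by rw [hx]⟩
  by_cases hy : y (!j) = y j
  · exact ⟨i, !j, by simp, by rw [hy]⟩
  refine ⟨!i, !j, by simp, ?_⟩
  rw [Int.units_ne_iff_eq_neg.1 hx, Int.units_ne_iff_eq_neg.1 hy, neg_mul_neg]

lemma not_existsUnique_of_sign_pairing {α : Type*} {P : α → Prop} (S : Bool → Bool → α)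
    (hS : Function.Injective2 S) (hP : ∀ t, P t ↔ ∃ i j, S i j = t) (sgn : α → ℤˣ)
    (x y : Bool → ℤˣ) (k : ℤˣ) (hsgn : ∀ i j, sgn (S i j) = x i * y j * k) (ε : ℤˣ) :
    ¬ ∃! t, P t ∧ sgn t = ε := by
  rintro ⟨t, ⟨hPt, hεt⟩, huniq⟩
  obtain ⟨i, j, rfl⟩ := (hP t).1 hPt
  obtain ⟨i', j', hne, hmul⟩ := exists_ne_mul_eq_mul x y i j
  have hS' : S i' j' = S i j :=
    huniq (S i' j') ⟨(hP _).2 ⟨i', j', rfl⟩, by rw [hsgn, hmul, ← hsgn, hεt]⟩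
  obtain ⟨rfl, rfl⟩ := hS hS'
  exact hne rfl

namespace SimpleGraph

variable {V : Type*} {G : SimpleGraph V}

structure CircleWithTwoChords (G : SimpleGraph V) (a b c d : V) where
  P₁ : G.Walk a b
  P₂ : G.Walk b c
  P₃ : G.Walk c d
  P₄ : G.Walk d a
  isCycle : (P₁.append (P₂.append (P₃.append P₄))).IsCycle
  adj_ab : G.Adj a b
  adj_cd : G.Adj c d
  ab_not_mem : s(a, b) ∉ (P₁.append (P₂.append (P₃.append P₄))).edges
  cd_not_mem : s(c, d) ∉ (P₁.append (P₂.append (P₃.append P₄))).edges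
  edgeSet_subset : ∀ f ∈ G.edgeSet,
    f ∈ (P₁.append (P₂.append (P₃.append P₄))).edges ∨ f = s(a, b) ∨ f = s(c, d)
  a_ne_c : a ≠ c
  a_ne_d : a ≠ d
  b_ne_c : b ≠ c
  b_ne_d : b ≠ d

namespace CircleWithTwoChords

open Walk

variable {a b c d : V} (K : G.CircleWithTwoChords a b c d)

lemma mem_edges_or_eq_chord {f : Sym2 V} (hf : f ∈ G.edgeSet) :
    f ∈ K.P₁.edges ∨ f ∈ K.P₂.edges ∨ f ∈ K.P₃.edges ∨ f ∈ K.P₄.edges ∨ f = s(a, b) ∨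
      f = s(c, d) := by
  simpa [edges_append, or_assoc] using K.edgeSet_subset f hf

lemma not_nil₁ : ¬K.P₁.Nil := not_nil_of_ne K.adj_ab.ne
lemma not_nil₂ : ¬K.P₂.Nil := not_nil_of_ne K.b_ne_c
lemma not_nil₃ : ¬K.P₃.Nil := not_nil_of_ne K.adj_cd.ne
lemma not_nil₄ : ¬K.P₄.Nil := not_nil_of_ne K.a_ne_d.symm

lemma mem_edges_iff_of_mem_P₁ {u : V} {w : G.Walk u u} (hw : w.IsCycle) {f g : Sym2 V}
    (hf : f ∈ K.P₁.edges) (hg : g ∈ K.P₁.edges) : f ∈ w.edges ↔ g ∈ w.edges :=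
  K.isCycle.mem_edges_iff_of_append (by simp [K.not_nil₂])
    (fun f hf => by rcases K.edgeSet_subset f hf with h | rfl | rfl <;> simp_all [edges_append])
    hw hf hg

lemma mem_edges_iff_of_mem_P₂ {u : V} {w : G.Walk u u} (hw : w.IsCycle) {f g : Sym2 V}
    (hf : f ∈ K.P₂.edges) (hg : g ∈ K.P₂.edges) : f ∈ w.edges ↔ g ∈ w.edges :=
  K.isCycle.rotate_append.mem_edges_iff_of_append (by simp [K.not_nil₃])
    (fun f hf => by
      rcases K.edgeSet_subset f hf with h | rfl | rfl <;> simp_all [edges_append]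
      tauto)
    hw hf hg

lemma mem_edges_iff_of_mem_P₃ {u : V} {w : G.Walk u u} (hw : w.IsCycle) {f g : Sym2 V}
    (hf : f ∈ K.P₃.edges) (hg : g ∈ K.P₃.edges) : f ∈ w.edges ↔ g ∈ w.edges :=
  K.isCycle.rotate_append.rotate_append.mem_edges_iff_of_append (by simp [K.not_nil₄])
    (fun f hf => by
      rcases K.edgeSet_subset f hf with h | rfl | rfl <;> simp_all [edges_append]
      tauto)
    hw hf hg

lemma mem_edges_iff_of_mem_P₄ {u : V} {w : G.Walk u u} (hw : w.IsCycle) {f g : Sym2 V}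
    (hf : f ∈ K.P₄.edges) (hg : g ∈ K.P₄.edges) : f ∈ w.edges ↔ g ∈ w.edges :=
  K.isCycle.rotate_append.rotate_append.rotate_append.mem_edges_iff_of_append
    (by simp [K.not_nil₁])
    (fun f hf => by
      rcases K.edgeSet_subset f hf with h | rfl | rfl <;> simp_all [edges_append]
      tauto)
    hw hf hg

lemma mem_edges_iff_xor_at_b {u : V} {w : G.Walk u u} (hw : w.IsCycle) :
    s(b, K.P₂.snd) ∈ w.edges ↔ Xor (s(K.P₁.penultimate, b) ∈ w.edges) (s(a, b) ∈ w.edges) := by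
  rw [← snd_append K.not_nil₂ (K.P₃.append K.P₄)]
  refine K.isCycle.mem_edges_iff_xor_of_append K.not_nil₁ (by simp [K.not_nil₂])
    (Sym2.mem_mk_right _ _) K.ab_not_mem (fun f hf hbf => ?_) hw
  rcases K.edgeSet_subset f hf with h | h | rfl
  · exact Or.inl h
  · exact Or.inr h
  · simp [K.b_ne_c, K.b_ne_d] at hbf

lemma mem_edges_iff_xor_at_c {u : V} {w : G.Walk u u} (hw : w.IsCycle) :
    s(K.P₂.penultimate, c) ∈ w.edges ↔ Xor (s(c, K.P₃.snd) ∈ w.edges) (s(c, d) ∈ w.edges) := by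
  have hG : ∀ f ∈ G.edgeSet, c ∈ f →
      f ∈ (K.P₂.append (K.P₃.append (K.P₄.append K.P₁))).edges ∨ f = s(c, d) := by
    intro f hf hcf
    rcases K.edgeSet_subset f hf with h | rfl | h
    · simp_all [edges_append]; tauto
    · simp [K.a_ne_c.symm, K.b_ne_c.symm] at hcf
    · exact Or.inr h
  have h := K.isCycle.rotate_append.mem_edges_iff_xor_of_append K.not_nil₂ (by simp [K.not_nil₃])
    (Sym2.mem_mk_left c d) (fun h => K.cd_not_mem (by simp_all [edges_append]; tauto)) hG hw
  rw [snd_append K.not_nil₃, xor_iff_iff_not] at h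
  rw [xor_iff_iff_not]
  tauto

lemma mem_edges_iff_xor_at_a {u : V} {w : G.Walk u u} (hw : w.IsCycle) :
    s(a, K.P₁.snd) ∈ w.edges ↔ Xor (s(K.P₄.penultimate, a) ∈ w.edges) (s(a, b) ∈ w.edges) := by
  rw [← snd_append K.not_nil₁ (K.P₂.append K.P₃)]
  refine K.isCycle.rotate_append.rotate_append.rotate_append.mem_edges_iff_xor_of_append
    K.not_nil₄ (by simp [K.not_nil₁]) (Sym2.mem_mk_left _ _)
    (fun h => K.ab_not_mem (by simp_all [edges_append]; tauto)) (fun f hf haf => ?_) hw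
  rcases K.edgeSet_subset f hf with h | h | rfl
  · simp_all [edges_append]; tauto
  · exact Or.inr h
  · simp [K.a_ne_c, K.a_ne_d] at haf

def circle (i j : Bool) : G.Walk a a :=
  (K.P₁.orChord K.adj_ab i).append (K.P₂.append ((K.P₃.orChord K.adj_cd j).append K.P₄))

lemma mem_edges_circle {f : Sym2 V} {i j : Bool} :
    f ∈ (K.circle i j).edges ↔ f ∈ (K.P₁.orChord K.adj_ab i).edges ∨ f ∈ K.P₂.edges ∨
      f ∈ (K.P₃.orChord K.adj_cd j).edges ∨ f ∈ K.P₄.edges := by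
  simp [circle, edges_append]

lemma isCycle_circle (i j : Bool) : (K.circle i j).IsCycle := by
  have h₃ := K.isCycle.rotate_append.rotate_append.orChord_append K.adj_cd
    (fun h => K.cd_not_mem (by simp_all [edges_append]; tauto)) j
  refine h₃.rotate_append.rotate_append.orChord_append K.adj_ab (fun h => ?_) i
  have := K.ab_not_mem
  cases j <;> simp_all [edges_append, K.a_ne_c, K.a_ne_d]

lemma ab_mem_circle_iff {i j : Bool} : s(a, b) ∈ (K.circle i j).edges ↔ i = true := by
  have := K.ab_not_mem
  cases i <;> cases j <;> simp_all [mem_edges_circle, edges_append, K.a_ne_c, K.a_ne_d]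

lemma cd_mem_circle_iff {i j : Bool} : s(c, d) ∈ (K.circle i j).edges ↔ j = true := by
  have := K.cd_not_mem
  cases i <;> cases j <;> simp_all [mem_edges_circle, edges_append, K.a_ne_c.symm, K.a_ne_d.symm]

lemma exists_circle_of_isCycle {u : V} {w : G.Walk u u} (hw : w.IsCycle) {e : Sym2 V}
    (he : e ∈ K.P₂.edges) (hew : e ∈ w.edges) :
    ∃ i j, ∀ f, f ∈ w.edges ↔ f ∈ (K.circle i j).edges := by
  classical
  have hP₂ : ∀ f ∈ K.P₂.edges, f ∈ w.edges :=
    fun f hf => (K.mem_edges_iff_of_mem_P₂ hw he hf).1 hew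
  have hb := (K.mem_edges_iff_xor_at_b hw).1 (hP₂ _ (mk_start_snd_mem_edges K.not_nil₂))
  have hc := (K.mem_edges_iff_xor_at_c hw).1 (hP₂ _ (mk_penultimate_end_mem_edges K.not_nil₂))
  have hP₁ : ∀ f ∈ K.P₁.edges, f ∈ w.edges ↔ s(a, b) ∉ w.edges := fun f hf =>
    (K.mem_edges_iff_of_mem_P₁ hw hf (mk_penultimate_end_mem_edges K.not_nil₁)).trans
      (xor_iff_iff_not.1 hb)
  have hP₃ : ∀ f ∈ K.P₃.edges, f ∈ w.edges ↔ s(c, d) ∉ w.edges := fun f hf =>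
    (K.mem_edges_iff_of_mem_P₃ hw hf (mk_start_snd_mem_edges K.not_nil₃)).trans
      (xor_iff_iff_not.1 hc)
  have hP₄ : ∀ f ∈ K.P₄.edges, f ∈ w.edges := by
    have ha := hP₁ _ (mk_start_snd_mem_edges K.not_nil₁)
    rw [K.mem_edges_iff_xor_at_a hw, xor_iff_iff_not] at ha
    exact fun f hf =>
      (K.mem_edges_iff_of_mem_P₄ hw hf (mk_penultimate_end_mem_edges K.not_nil₄)).2 (by tauto)
  refine ⟨decide (s(a, b) ∈ w.edges), decide (s(c, d) ∈ w.edges), fun f =>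
    ⟨fun hf => ?_, fun hf => ?_⟩⟩
  · rcases K.mem_edges_or_eq_chord (w.edges_subset_edgeSet hf) with h | h | h | h | rfl | rfl <;>
      simp_all [mem_edges_circle]
  · rw [mem_edges_circle] at hf
    rcases hf with h | h | h | h
    · by_cases hab : s(a, b) ∈ w.edges <;> simp_all
    · exact hP₂ f h
    · by_cases hcd : s(c, d) ∈ w.edges <;> simp_all
    · exact hP₄ f h

lemma isCircleOf_and_mem_iff [DecidableEq V] {e : Sym2 V} (he : e ∈ K.P₂.edges)
    (s : Finset (Sym2 V)) : IsCircleOf G s ∧ e ∈ s ↔ ∃ i j, (K.circle i j).edges.toFinset = s := by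
  constructor
  · rintro ⟨⟨u, w, hw, rfl⟩, hew⟩
    obtain ⟨i, j, hij⟩ := K.exists_circle_of_isCycle hw he (List.mem_toFinset.1 hew)
    exact ⟨i, j, Finset.ext fun f => by simp [hij]⟩
  · rintro ⟨i, j, rfl⟩
    exact ⟨⟨a, _, K.isCycle_circle i j, rfl⟩, by simp [mem_edges_circle, he]⟩

lemma injective2_circle [DecidableEq V] :
    Function.Injective2 fun i j => (K.circle i j).edges.toFinset := by
  intro i i' j j' h
  have hab := congrArg (s(a, b) ∈ ·) h
  have hcd := congrArg (s(c, d) ∈ ·) h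
  simp only [List.mem_toFinset, ab_mem_circle_iff, cd_mem_circle_iff, eq_iff_iff] at hab hcd
  exact ⟨Bool.eq_iff_iff.2 hab, Bool.eq_iff_iff.2 hcd⟩

lemma esign_circle [DecidableEq V] (σ : Sym2 V → ℤˣ) (i j : Bool) :
    esign σ (K.circle i j).edges.toFinset = wsign σ (K.P₁.orChord K.adj_ab i) *
      wsign σ (K.P₃.orChord K.adj_cd j) * (wsign σ K.P₂ * wsign σ K.P₄) := by
  rw [esign_toFinset_edges σ (K.isCycle_circle i j).isTrail]
  simp only [circle, wsign_append]
  ac_rfl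

lemma not_existsUnique_circle [DecidableEq V] (σ : Sym2 V → ℤˣ) {e : Sym2 V}
    (he : e ∈ K.P₂.edges) (ε : ℤˣ) :
    ¬ ∃! s : Finset (Sym2 V), IsCircleOf G s ∧ e ∈ s ∧ esign σ s = ε := by
  simpa only [and_assoc] using not_existsUnique_of_sign_pairing _ K.injective2_circle
    (K.isCircleOf_and_mem_iff he) (esign σ) _ _ _ (K.esign_circle σ) ε

end CircleWithTwoChords
end SimpleGraph

theorem not_battery_on_non_handle_segment_general {V : Type*} [DecidableEq V]
    (G : SimpleGraph V) (σ : Sym2 V → ℤˣ) {a b c d : V}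
    (hac : a ≠ c) (had : a ≠ d) (hbc : b ≠ c) (hbd : b ≠ d)
    (P₁ : G.Walk a b) (P₂ : G.Walk b c) (P₃ : G.Walk c d) (P₄ : G.Walk d a)
    (hC : (P₁.append (P₂.append (P₃.append P₄))).IsCycle)
    -- the two chords, joining the endpoints of the segments `P₁` and `P₃`:
    (hc₁ : G.Adj a b) (hc₂ : G.Adj c d)
    (hch₁ : s(a, b) ∉ (P₁.append (P₂.append (P₃.append P₄))).edges)
    (hch₂ : s(c, d) ∉ (P₁.append (P₂.append (P₃.append P₄))).edges)
    -- the underlying graph is exactly the circle together with the two chords: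
    (hedges : ∀ f : Sym2 V, f ∈ G.edgeSet ↔
      f ∈ (P₁.append (P₂.append (P₃.append P₄))).edges ∨ f = s(a, b) ∨ f = s(c, d))
    -- `e` lies on the segment of the circle between the two chords:
    (e : Sym2 V) (he : e ∈ P₂.edges) :
    ¬ (∃! s : Finset (Sym2 V), IsCircleOf G s ∧ e ∈ s ∧ esign σ s = -1) ∧
    ¬ (∃! s : Finset (Sym2 V), IsCircleOf G s ∧ e ∈ s ∧ esign σ s = 1) := by
  let K : G.CircleWithTwoChords a b c d :=
    ⟨P₁, P₂, P₃, P₄, hC, hc₁, hc₂, hch₁, hch₂, fun f hf => (hedges f).1 hf, hac, had, hbc, hbd⟩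
  exact ⟨K.not_existsUnique_circle σ he (-1), K.not_existsUnique_circle σ he 1⟩

theorem not_battery_on_non_handle_segment {V : Type*} [DecidableEq V]
    (G : SimpleGraph V) (σ : Sym2 V → ℤˣ) {a b c d : V}
    (hab : a ≠ b) (hac : a ≠ c) (had : a ≠ d) (hbc : b ≠ c) (hbd : b ≠ d) (hcd : c ≠ d)
    (P₁ : G.Walk a b) (P₂ : G.Walk b c) (P₃ : G.Walk c d) (P₄ : G.Walk d a)
    (hC : (P₁.append (P₂.append (P₃.append P₄))).IsCycle)
    -- the two chords, joining the endpoints of the segments `P₁` and `P₃`: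
    (hc₁ : G.Adj a b) (hc₂ : G.Adj c d)
    (hch₁ : s(a, b) ∉ (P₁.append (P₂.append (P₃.append P₄))).edges)
    (hch₂ : s(c, d) ∉ (P₁.append (P₂.append (P₃.append P₄))).edges)
    -- the underlying graph is exactly the circle together with the two chords:
    (hedges : ∀ f : Sym2 V, f ∈ G.edgeSet ↔
      f ∈ (P₁.append (P₂.append (P₃.append P₄))).edges ∨ f = s(a, b) ∨ f = s(c, d))
    -- `e` lies on the segment of the circle between the two chords:
    (e : Sym2 V) (he : e ∈ P₂.edges) :
    ¬ (∃! s : Finset (Sym2 V), IsCircleOf G s ∧ e ∈ s ∧ esign σ s = -1) ∧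
    ¬ (∃! s : Finset (Sym2 V), IsCircleOf G s ∧ e ∈ s ∧ esign σ s = 1) :=
  not_battery_on_non_handle_segment_general G σ hac had hbc hbd P₁ P₂ P₃ P₄ hC hc₁ hc₂ hch₁ hch₂
    hedges e he
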